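/- Let n ≥ 3 and let a be a constant with 0 < a < n−2. Then there exists C > 0 such that for all y ∈ ℝⁿ: ∫_{ℝⁿ} |y−z|^{−(n−2)}·(1+|z|)^{−(2+a)} dz ≤ C·(1+|y|)^{−a}. -/

import Mathlib

/-!
For `‖y - z‖^{-α} (1 + ‖z‖)^{-β}` on a `d`-dimensional space put `ρ = 1 + ‖y‖` and split the space
into three regions. On `ball y (ρ/2)` the decaying factor is at most `(ρ/2)^{-β}` and the singular
factor integrates to `≍ ρ^{d-α}`; on the rest of `ball 0 (2ρ)` the singular factor is at most
`(ρ/2)^{-α}` and `‖z‖^{-β}` integrates to `≍ ρ^{d-β}`; outside `ball 0 (2ρ)` we have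
`‖y - z‖ ≥ ‖z‖/2`, so the integrand is `≲ ‖z‖^{-(α+β)}`, whose integral there is `≍ ρ^{d-α-β}`.
Each piece is thus `≲ ρ^{d-α-β}`; the radial integrals are computed exactly in polar coordinates.
The theorem is the case `d = n`, `α = n - 2`, `β = 2 + a`.
-/

open MeasureTheory Metric Set Filter

noncomputable section

abbrev Euc (n : ℕ) := EuclideanSpace ℝ (Fin n)

open Module
open scoped ENNReal

theorem lintegral_Ioo_rpow {s r : ℝ} (hs : -1 < s) (hr : 0 < r) :
    ∫⁻ t in Ioo 0 r, ENNReal.ofReal (t ^ s) = ENNReal.ofReal (r ^ (s + 1) / (s + 1)) := by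
  have hint : IntegrableOn (fun t : ℝ => t ^ s) (Ioo 0 r) :=
    (intervalIntegral.integrableOn_Ioo_rpow_iff hr).2 hs
  rw [← ofReal_integral_eq_lintegral_ofReal hint, ← integral_Ioc_eq_integral_Ioo,
    ← intervalIntegral.integral_of_le hr.le, integral_rpow (Or.inl hs),
    Real.zero_rpow (by linarith), sub_zero]
  filter_upwards [ae_restrict_mem measurableSet_Ioo] with t ht
  exact Real.rpow_nonneg ht.1.le _

theorem lintegral_Ioi_rpow_of_lt {s r : ℝ} (hs : s < -1) (hr : 0 < r) :
    ∫⁻ t in Ioi r, ENNReal.ofReal (t ^ s) = ENNReal.ofReal (-r ^ (s + 1) / (s + 1)) := by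
  rw [← ofReal_integral_eq_lintegral_ofReal (integrableOn_Ioi_rpow_of_lt hs hr),
    integral_Ioi_rpow_of_lt hs hr]
  filter_upwards [ae_restrict_mem measurableSet_Ioi] with t ht
  exact Real.rpow_nonneg (hr.trans ht).le _

section RadialIntegrals

variable {E : Type*} [NormedAddCommGroup E] [NormedSpace ℝ E] [FiniteDimensional ℝ E]
  [MeasurableSpace E] [BorelSpace E] [Nontrivial E] (μ : Measure E) [μ.IsAddHaarMeasure]

theorem lintegral_fun_norm_addHaar {g : ℝ → ℝ≥0∞} (hg : Measurable g) :
    ∫⁻ x, g ‖x‖ ∂μ =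
      μ.toSphere univ * ∫⁻ t in Ioi 0, ENNReal.ofReal (t ^ (finrank ℝ E - 1)) * g t := by
  have h_polar : ∫⁻ x, g ‖x‖ ∂μ = ∫⁻ p : sphere (0 : E) 1 × Ioi (0 : ℝ), g p.2
      ∂(μ.toSphere.prod (.volumeIoiPow (finrank ℝ E - 1))) := by
    rw [← restrict_compl_singleton (μ := μ) 0,
      ← lintegral_subtype_comap (measurableSet_singleton 0).compl, restrict_compl_singleton,
      ← μ.measurePreserving_homeomorphUnitSphereProd.lintegral_comp_emb
        (Homeomorph.measurableEmbedding _) (fun p => g p.2)]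
    simp only [homeomorphUnitSphereProd_apply_snd_coe]
  have h_radial : ∫⁻ r : Ioi (0 : ℝ), g r ∂(.volumeIoiPow (finrank ℝ E - 1)) =
      ∫⁻ t in Ioi 0, ENNReal.ofReal (t ^ (finrank ℝ E - 1)) * g t := by
    rw [Measure.volumeIoiPow, lintegral_withDensity_eq_lintegral_mul _
      (measurable_subtype_coe.pow_const _).ennreal_ofReal (g := fun r : Ioi (0 : ℝ) => g r)
      (hg.comp measurable_subtype_coe)]
    exact lintegral_subtype_comap measurableSet_Ioi
      (fun t => ENNReal.ofReal (t ^ (finrank ℝ E - 1)) * g t)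
  rw [h_polar, lintegral_prod (fun p : sphere (0 : E) 1 × Ioi (0 : ℝ) => g p.2)
    (hg.comp (measurable_subtype_coe.comp measurable_snd)).aemeasurable]
  dsimp only
  rw [lintegral_const, h_radial, mul_comm]

theorem setLIntegral_preimage_norm {g : ℝ → ℝ≥0∞} (hg : Measurable g) {s : Set ℝ}
    (hs : MeasurableSet s) :
    ∫⁻ x in (‖·‖) ⁻¹' s, g ‖x‖ ∂μ =
      μ.toSphere univ * ∫⁻ t in s ∩ Ioi 0, ENNReal.ofReal (t ^ (finrank ℝ E - 1)) * g t := by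
  have h := lintegral_fun_norm_addHaar μ (hg.indicator hs)
  simp only [← indicator_comp_right (g := g) (‖·‖), Function.comp_def] at h
  rw [← lintegral_indicator (measurable_norm hs), h, ← Measure.restrict_restrict hs,
    ← lintegral_indicator hs]
  simp only [indicator_mul_right]

omit [MeasurableSpace E] [BorelSpace E] in
theorem ofReal_pow_finrank_sub_one_mul_ofReal_rpow {t : ℝ} (ht : 0 < t) (s : ℝ) :
    ENNReal.ofReal (t ^ (finrank ℝ E - 1)) * ENNReal.ofReal (t ^ s) =
      ENNReal.ofReal (t ^ ((finrank ℝ E : ℝ) + s - 1)) := by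
  rw [← ENNReal.ofReal_mul (by positivity), ← Real.rpow_natCast, ← Real.rpow_add ht,
    Nat.cast_sub finrank_pos, Nat.cast_one, sub_add_eq_add_sub]

theorem setLIntegral_ball_norm_rpow {s r : ℝ} (hs : -(finrank ℝ E : ℝ) < s) (hr : 0 < r) :
    ∫⁻ x in ball (0 : E) r, ENNReal.ofReal (‖x‖ ^ s) ∂μ =
      μ.toSphere univ * ENNReal.ofReal (r ^ (finrank ℝ E + s) / (finrank ℝ E + s)) := by
  have h_ball : ball (0 : E) r = (‖·‖) ⁻¹' Iio r := by ext; simp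
  rw [h_ball, setLIntegral_preimage_norm μ (g := fun t => ENNReal.ofReal (t ^ s))
      (by fun_prop) measurableSet_Iio, Iio_inter_Ioi,
    setLIntegral_congr_fun measurableSet_Ioo
      fun t ht => ofReal_pow_finrank_sub_one_mul_ofReal_rpow ht.1 s,
    lintegral_Ioo_rpow (by linarith) hr, sub_add_cancel]

theorem setLIntegral_ball_norm_sub_rpow (y : E) {s r : ℝ} (hs : -(finrank ℝ E : ℝ) < s)
    (hr : 0 < r) :
    ∫⁻ z in ball y r, ENNReal.ofReal (‖y - z‖ ^ s) ∂μ =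
      μ.toSphere univ * ENNReal.ofReal (r ^ (finrank ℝ E + s) / (finrank ℝ E + s)) := by
  have h_ball : ball y r = (y - ·) ⁻¹' ball 0 r := by
    ext z; rw [mem_preimage, mem_ball_zero_iff, mem_ball_iff_norm']
  rw [h_ball, (Measure.measurePreserving_sub_left μ y).setLIntegral_comp_preimage_emb
    (Homeomorph.subLeft y).measurableEmbedding (fun x => ENNReal.ofReal (‖x‖ ^ s)),
    setLIntegral_ball_norm_rpow μ hs hr]

theorem setLIntegral_compl_ball_norm_rpow {s r : ℝ} (hs : s < -(finrank ℝ E : ℝ)) (hr : 0 < r) :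
    ∫⁻ x in (ball (0 : E) r)ᶜ, ENNReal.ofReal (‖x‖ ^ s) ∂μ =
      μ.toSphere univ * ENNReal.ofReal (r ^ (finrank ℝ E + s) / -(finrank ℝ E + s)) := by
  have h_compl : (ball (0 : E) r)ᶜ = (‖·‖) ⁻¹' Ici r := by ext; simp
  rw [h_compl, setLIntegral_preimage_norm μ (g := fun t => ENNReal.ofReal (t ^ s))
      (by fun_prop) measurableSet_Ici,
    inter_eq_left.2 (Ici_subset_Ioi.2 hr), setLIntegral_congr Ioi_ae_eq_Ici.symm,
    setLIntegral_congr_fun measurableSet_Ioi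
      fun t ht => ofReal_pow_finrank_sub_one_mul_ofReal_rpow (hr.trans ht) s,
    lintegral_Ioi_rpow_of_lt (by linarith) hr, sub_add_cancel, neg_div, div_neg]

end RadialIntegrals

def rieszPotentialIntegrand {E : Type*} [NormedAddCommGroup E] (α β : ℝ) (y z : E) : ℝ :=
  ‖y - z‖ ^ (-α) * (1 + ‖z‖) ^ (-β)

section RieszPotentialEstimate

variable {E : Type*} [NormedAddCommGroup E] [NormedSpace ℝ E] [FiniteDimensional ℝ E]
  [MeasurableSpace E] [BorelSpace E] [Nontrivial E] (μ : Measure E) [μ.IsAddHaarMeasure]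
  {α β : ℝ}

theorem setLIntegral_ball_rieszPotentialIntegrand_le (hα : α < finrank ℝ E) (hβ : 0 ≤ β)
    (y : E) :
    ∫⁻ z in ball y ((1 + ‖y‖) / 2), ENNReal.ofReal (rieszPotentialIntegrand α β y z) ∂μ ≤
      μ.toSphere univ *
        ENNReal.ofReal (((1 + ‖y‖) / 2) ^ (finrank ℝ E - α - β) / (finrank ℝ E - α)) := by
  set r := (1 + ‖y‖) / 2 with hr_def
  have hr : 0 < r := by positivity
  calc ∫⁻ z in ball y r, ENNReal.ofReal (rieszPotentialIntegrand α β y z) ∂μ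
      ≤ ∫⁻ z in ball y r, ENNReal.ofReal (r ^ (-β)) * ENNReal.ofReal (‖y - z‖ ^ (-α)) ∂μ := by
        refine setLIntegral_mono' measurableSet_ball fun z hz => ?_
        have hyz : ‖y - z‖ < r := by rwa [mem_ball_iff_norm'] at hz
        have hrz : r ≤ 1 + ‖z‖ := by
          have := norm_sub_norm_le y z
          linarith
        rw [rieszPotentialIntegrand, ← ENNReal.ofReal_mul (Real.rpow_nonneg hr.le _), mul_comm]
        exact ENNReal.ofReal_le_ofReal (mul_le_mul_of_nonneg_right
          (Real.rpow_le_rpow_of_nonpos hr hrz (neg_nonpos.2 hβ)) (by positivity))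
    _ = ENNReal.ofReal (r ^ (-β)) * (μ.toSphere univ *
          ENNReal.ofReal (r ^ (finrank ℝ E - α) / (finrank ℝ E - α))) := by
        rw [lintegral_const_mul' _ _ ENNReal.ofReal_ne_top,
          setLIntegral_ball_norm_sub_rpow μ y (neg_lt_neg hα) hr, ← sub_eq_add_neg]
    _ = _ := by
        rw [mul_left_comm, ← ENNReal.ofReal_mul (Real.rpow_nonneg hr.le _), ← mul_div_assoc,
          ← Real.rpow_add hr, neg_add_eq_sub, sub_right_comm]

theorem setLIntegral_ball_sdiff_ball_rieszPotentialIntegrand_le (hα : 0 ≤ α) (hβ₀ : 0 ≤ β)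
    (hβ : β < finrank ℝ E) (y : E) :
    ∫⁻ z in ball 0 (2 * (1 + ‖y‖)) \ ball y ((1 + ‖y‖) / 2),
        ENNReal.ofReal (rieszPotentialIntegrand α β y z) ∂μ ≤
      μ.toSphere univ * ENNReal.ofReal (((1 + ‖y‖) / 2) ^ (-α) *
        ((2 * (1 + ‖y‖)) ^ (finrank ℝ E - β) / (finrank ℝ E - β))) := by
  set r := (1 + ‖y‖) / 2
  set T := 2 * (1 + ‖y‖)
  have hr : 0 < r := by positivity
  calc ∫⁻ z in ball 0 T \ ball y r, ENNReal.ofReal (rieszPotentialIntegrand α β y z) ∂μ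
      ≤ ∫⁻ z in ball 0 T \ ball y r,
          ENNReal.ofReal (r ^ (-α)) * ENNReal.ofReal (‖z‖ ^ (-β)) ∂μ := by
        refine setLIntegral_mono_ae' (measurableSet_ball.diff measurableSet_ball) ?_
        filter_upwards [(countable_singleton (0 : E)).ae_notMem μ] with z hz₀ hz
        have hyz : r ≤ ‖y - z‖ := not_lt.1 fun h => hz.2 (mem_ball_iff_norm'.2 h)
        have hz : 0 < ‖z‖ := norm_pos_iff.2 hz₀
        rw [← ENNReal.ofReal_mul (Real.rpow_nonneg hr.le _)]
        exact ENNReal.ofReal_le_ofReal (mul_le_mul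
          (Real.rpow_le_rpow_of_nonpos hr hyz (neg_nonpos.2 hα))
          (Real.rpow_le_rpow_of_nonpos hz (by linarith) (neg_nonpos.2 hβ₀))
          (by positivity) (Real.rpow_nonneg hr.le _))
    _ ≤ ENNReal.ofReal (r ^ (-α)) * ∫⁻ z in ball 0 T, ENNReal.ofReal (‖z‖ ^ (-β)) ∂μ := by
        rw [lintegral_const_mul' _ _ ENNReal.ofReal_ne_top]
        gcongr
        exact sdiff_subset
    _ = _ := by
        rw [setLIntegral_ball_norm_rpow μ (neg_lt_neg hβ) (by positivity), mul_left_comm,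
          ← ENNReal.ofReal_mul (Real.rpow_nonneg hr.le _), ← sub_eq_add_neg]

theorem setLIntegral_compl_ball_rieszPotentialIntegrand_le (hα : 0 ≤ α) (hβ : 0 ≤ β)
    (hαβ : finrank ℝ E < α + β) (y : E) :
    ∫⁻ z in (ball 0 (2 * (1 + ‖y‖)))ᶜ, ENNReal.ofReal (rieszPotentialIntegrand α β y z) ∂μ ≤
      μ.toSphere univ * ENNReal.ofReal (2 ^ α *
        ((2 * (1 + ‖y‖)) ^ (finrank ℝ E - α - β) / (α + β - finrank ℝ E))) := by
  set T := 2 * (1 + ‖y‖)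
  have hT : 0 < T := by positivity
  calc ∫⁻ z in (ball 0 T)ᶜ, ENNReal.ofReal (rieszPotentialIntegrand α β y z) ∂μ
      ≤ ∫⁻ z in (ball 0 T)ᶜ,
          ENNReal.ofReal (2 ^ α) * ENNReal.ofReal (‖z‖ ^ (-(α + β))) ∂μ := by
        refine setLIntegral_mono' measurableSet_ball.compl fun z hz => ?_
        have hTz : T ≤ ‖z‖ := by simpa using hz
        have hz : 0 < ‖z‖ := hT.trans_le hTz
        have hyz : ‖z‖ / 2 ≤ ‖y - z‖ := by
          have := norm_sub_norm_le z y
          rw [norm_sub_rev] at this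
          linarith
        rw [← ENNReal.ofReal_mul (by positivity)]
        refine ENNReal.ofReal_le_ofReal ?_
        calc ‖y - z‖ ^ (-α) * (1 + ‖z‖) ^ (-β) ≤ (‖z‖ / 2) ^ (-α) * ‖z‖ ^ (-β) :=
              mul_le_mul (Real.rpow_le_rpow_of_nonpos (by positivity) hyz (neg_nonpos.2 hα))
                (Real.rpow_le_rpow_of_nonpos hz (by linarith) (neg_nonpos.2 hβ))
                (by positivity) (by positivity)
          _ = 2 ^ α * ‖z‖ ^ (-(α + β)) := by
              rw [Real.div_rpow hz.le zero_le_two, Real.rpow_neg zero_le_two, neg_add,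
                Real.rpow_add hz]
              field_simp
    _ = _ := by
        rw [lintegral_const_mul' _ _ ENNReal.ofReal_ne_top,
          setLIntegral_compl_ball_norm_rpow μ (by linarith) hT, mul_left_comm,
          ← ENNReal.ofReal_mul (by positivity), ← sub_eq_add_neg, neg_sub', sub_add_eq_sub_sub,
          neg_sub_neg]

theorem exists_lintegral_rieszPotentialIntegrand_le (hα₀ : 0 ≤ α) (hα : α < finrank ℝ E)
    (hβ : β < finrank ℝ E) (hαβ : finrank ℝ E < α + β) :
    ∃ C : ℝ, 0 < C ∧ ∀ y : E, ∫⁻ z, ENNReal.ofReal (rieszPotentialIntegrand α β y z) ∂μ ≤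
      ENNReal.ofReal (C * (1 + ‖y‖) ^ (finrank ℝ E - α - β)) := by
  set d : ℝ := (finrank ℝ E : ℝ)
  set e := d - α - β with he
  have hσ : 0 < μ.toSphere.real univ := by
    rw [measureReal_def, ENNReal.toReal_pos_iff]
    exact ⟨Measure.measure_univ_pos.2 ((μ.toSphere_eq_zero_iff).not.2 (not_subsingleton E)),
      measure_lt_top _ _⟩
  have hdα : 0 < d - α := sub_pos.2 hα
  have hdβ : 0 < d - β := sub_pos.2 hβ
  have hαβd : 0 < α + β - d := sub_pos.2 hαβ
  set c := (2 ^ e)⁻¹ / (d - α) + 2 ^ α * 2 ^ (d - β) / (d - β) + 2 ^ α * 2 ^ e / (α + β - d)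
  refine ⟨μ.toSphere.real univ * c, by positivity, fun y => ?_⟩
  set ρ := 1 + ‖y‖
  have hρ : 0 < ρ := by positivity
  set f := fun z => ENNReal.ofReal (rieszPotentialIntegrand α β y z)
  have h_scale : (ρ / 2) ^ e / (d - α) + (ρ / 2) ^ (-α) * ((2 * ρ) ^ (d - β) / (d - β)) +
      2 ^ α * ((2 * ρ) ^ e / (α + β - d)) = c * ρ ^ e := by
    have hρe : ρ ^ e = ρ ^ (-α) * ρ ^ (d - β) := by
      rw [← Real.rpow_add hρ, he]; congr 1; ring
    rw [Real.div_rpow hρ.le zero_le_two, Real.div_rpow hρ.le zero_le_two,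
      Real.mul_rpow zero_le_two hρ.le, Real.mul_rpow zero_le_two hρ.le,
      Real.rpow_neg zero_le_two α, hρe]
    simp only [c]
    field_simp
  calc ∫⁻ z, f z ∂μ
      = (∫⁻ z in ball 0 (2 * ρ) ∩ ball y (ρ / 2), f z ∂μ) +
          (∫⁻ z in ball 0 (2 * ρ) \ ball y (ρ / 2), f z ∂μ) +
          ∫⁻ z in (ball 0 (2 * ρ))ᶜ, f z ∂μ := by
        rw [lintegral_inter_add_sdiff _ _ measurableSet_ball,
          lintegral_add_compl _ measurableSet_ball]
    _ ≤ (∫⁻ z in ball y (ρ / 2), f z ∂μ) +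
          (∫⁻ z in ball 0 (2 * ρ) \ ball y (ρ / 2), f z ∂μ) +
          ∫⁻ z in (ball 0 (2 * ρ))ᶜ, f z ∂μ := by
        gcongr
        exact inter_subset_right
    _ ≤ μ.toSphere univ * ENNReal.ofReal ((ρ / 2) ^ e / (d - α)) +
          μ.toSphere univ * ENNReal.ofReal ((ρ / 2) ^ (-α) * ((2 * ρ) ^ (d - β) / (d - β))) +
          μ.toSphere univ * ENNReal.ofReal (2 ^ α * ((2 * ρ) ^ e / (α + β - d))) :=
        add_le_add (add_le_add (setLIntegral_ball_rieszPotentialIntegrand_le μ hα (by linarith) y)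
          (setLIntegral_ball_sdiff_ball_rieszPotentialIntegrand_le μ hα₀ (by linarith) hβ y))
          (setLIntegral_compl_ball_rieszPotentialIntegrand_le μ hα₀ (by linarith) hαβ y)
    _ = ENNReal.ofReal (μ.toSphere.real univ * c * ρ ^ e) := by
        rw [← mul_add, ← mul_add, ← ENNReal.ofReal_add (by positivity) (by positivity),
          ← ENNReal.ofReal_add (by positivity) (by positivity), h_scale, mul_assoc,
          ENNReal.ofReal_mul hσ.le, ofReal_measureReal]

end RieszPotentialEstimate

/-- For `n ≥ 3` and `0 < a < n - 2` there exists `C > 0` such that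
`∫ z, ‖y - z‖^{-(n-2)} (1 + ‖z‖)^{-(2+a)} dz ≤ C (1 + ‖y‖)^{-a}` for all `y ∈ ℝⁿ`. -/
theorem statement13 (n : ℕ) (hn : 3 ≤ n) (a : ℝ) (ha : 0 < a) (ha' : a < (n : ℝ) - 2) :
    ∃ C : ℝ, 0 < C ∧ ∀ y : Euc n,
      (∫ z : Euc n, ‖y - z‖ ^ (-((n : ℝ) - 2)) * (1 + ‖z‖) ^ (-((2 : ℝ) + a)))
        ≤ C * (1 + ‖y‖) ^ (-a) := by
  have hdim : (finrank ℝ (Euc n) : ℝ) = n := by simp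
  have : Nontrivial (Euc n) := nontrivial_of_finrank_pos (R := ℝ) (by simp; omega)
  have hn' : (3 : ℝ) ≤ n := by exact_mod_cast hn
  obtain ⟨C, hC, h_bound⟩ := exists_lintegral_rieszPotentialIntegrand_le
    (volume : Measure (Euc n)) (α := n - 2) (β := 2 + a) (by linarith) (by rw [hdim]; linarith)
    (by rw [hdim]; linarith) (by rw [hdim]; linarith)
  refine ⟨C, hC, fun y => ?_⟩
  have h_exp : (finrank ℝ (Euc n) : ℝ) - (n - 2) - (2 + a) = -a := by rw [hdim]; ring
  rw [integral_eq_lintegral_of_nonneg_ae (ae_of_all _ fun z => by positivity) (by fun_prop)]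
  exact ENNReal.toReal_le_of_le_ofReal (by positivity) (h_exp ▸ h_bound y)
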